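/- For all ordinals δ₀, δ₁, η, α: if δ₀ ≪ δ₁ {η} then δ₀ # α ≪ δ₁ # α {η}. -/

import Mathlib

open Ordinal Set
universe u

noncomputable def Ordinal.nadd : Ordinal.{u} → Ordinal.{u} → Ordinal.{u}
  | a, b =>
    max (blsub.{u, u} a fun a' _ => nadd a' b) (blsub.{u, u} b fun b' _ => nadd a b')
termination_by o₁ o₂ => (o₁, o₂)

infixl:65 " ♯ " => Ordinal.nadd

noncomputable section

/-- A cardinal is weakly inaccessible: uncountable, regular, and a limit cardinal. -/
def WeaklyInaccessible (c : Cardinal) : Prop :=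
  Cardinal.aleph0 < c ∧ c.IsRegular ∧ ∀ x < c, Order.succ x < c

/-- `I` is (the initial ordinal of) the least weakly inaccessible cardinal. -/
def I : Ordinal := (sInf {c : Cardinal | WeaklyInaccessible c}).ord

/-- `Om α` is `Ω_α`: `0` for `α = 0` and the initial ordinal of `ℵ_α` otherwise. -/
def Om (α : Ordinal) : Ordinal := if α = 0 then 0 else (Cardinal.aleph α).ord

/-- `R = {Ω_{μ+1} : μ < I} ∪ {I}`. -/
def R : Set Ordinal := {o | (∃ μ < I, o = Om (μ + 1)) ∨ o = I}

/-- Given the family of hulls at earlier stages, the collapse `ψ_σ`. -/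
def psiOf (F : Set Ordinal → Set Ordinal) (σ : Ordinal) : Ordinal :=
  sInf ({β | β < σ ∧ σ ∈ F (Set.Iio β) ∧ F (Set.Iio β) ∩ Set.Iio σ ⊆ Set.Iio β} ∪ {σ})

instance : WellFoundedRelation Ordinal := ⟨(· < ·), Ordinal.lt_wf⟩

/-- `H α X` is the least set of ordinals containing `X ∪ {0, I}` and closed under
ordinal addition, `β ↦ ω^β`, `β ↦ Ω_β`, and `(σ, β) ↦ ψ_σ β` for `σ ∈ R` and `β < α`. -/
def H (α : Ordinal) (X : Set Ordinal) : Set Ordinal :=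
  ⋂₀ {Y : Set Ordinal | X ∪ {0, I} ⊆ Y ∧
      (∀ γ ∈ Y, ∀ δ ∈ Y, γ + δ ∈ Y) ∧
      (∀ γ ∈ Y, Ordinal.omega0 ^ γ ∈ Y) ∧
      (∀ γ ∈ Y, Om γ ∈ Y) ∧
      (∀ σ ∈ R, ∀ β ∈ Y, β < α → σ ∈ Y → psiOf (H β) σ ∈ Y)}
termination_by α
decreasing_by assumption

/-- The collapsing function `ψ_σ α`. -/
def psi (σ α : Ordinal) : Ordinal := psiOf (H α) σ

/-- The relation `δ₀ ≪ δ₁ {η}`. -/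
def llr (η δ₀ δ₁ : Ordinal) : Prop :=
  δ₀ < δ₁ ∧ ∀ σ ∈ R, ∀ α : Ordinal,
    δ₁ ∈ H α (Set.Iio (psi σ α)) → η ∈ H α (Set.Iio (psi σ α)) → δ₀ ∈ H α (Set.Iio (psi σ α))

/-!
The natural sum adds Cantor normal forms exponentwise. Indeed `♯` is the least function that is
strictly monotone in each argument, and the exponentwise sum is one such function; conversely, `♯`
is superadditive, `(a ♯ b) + (c ♯ d) ≤ (a + c) ♯ (b + d)`, which bounds it below by the
exponentwise sum, split off at the leading exponent. Hence the exponents of `a ♯ b` are those of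
`a` together with those of `b`.

Each hull `H α (Iio β)` contains `0`, is closed under `+` and `ω ^ ·`, and contains the exponents
of its elements: besides the elements of `Iio β`, sums and `ω`-powers, its generators `I`, `Ω_γ`
and `ψ_σ γ` are `0` or ε-numbers; for `ψ_σ γ` this is because its defining property closes it
under the operations of the hull. Such a set contains `a ♯ b` iff it contains `a` and `b`. So
`δ₁ ♯ α ∈ H` gives `δ₁, α ∈ H`, then `δ₀ ∈ H` by `δ₀ ≪ δ₁ {η}`, and finally `δ₀ ♯ α ∈ H`.
-/

theorem WellFoundedLT.induction₂ {α β : Type*} [Preorder α] [WellFoundedLT α] [Preorder β]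
    [WellFoundedLT β] {P : α → β → Prop}
    (ih : ∀ a b, (∀ a' b', (a', b') < (a, b) → P a' b') → P a b) (a : α) (b : β) : P a b := by
  suffices ∀ p : α × β, P p.1 p.2 from this (a, b)
  intro p
  induction p using WellFoundedLT.induction with
  | ind p IH => exact ih p.1 p.2 fun a' b' h => IH (a', b') h

namespace Ordinal.CNF

variable {b : Ordinal}

theorem coeff_lt (hb : 1 < b) (x e : Ordinal) : coeff b x e < b := by
  by_cases he : e ∈ (CNF b x).map Prod.fst
  · obtain ⟨⟨e, c⟩, hc, rfl⟩ := List.mem_map.1 he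
    rw [coeff_of_mem_CNF hc]
    exact snd_lt hb hc
  · rw [coeff_of_notMem_CNF he]
    exact zero_lt_one.trans hb

theorem opow_le_of_mem_support_coeff {x e : Ordinal} (he : e ∈ (coeff b x).support) :
    b ^ e ≤ x :=
  not_lt.1 fun hx => Finsupp.mem_support_iff.1 he (coeff_eq_zero_of_lt hx)

theorem le_of_mem_support_coeff (hb : 1 < b) {x e : Ordinal} (he : e ∈ (coeff b x).support) :
    e ≤ x :=
  (right_le_opow e hb).trans (opow_le_of_mem_support_coeff he)

theorem lt_of_mem_support_coeff (hb : 1 < b) {x e E : Ordinal} (hx : x < b ^ E)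
    (he : e ∈ (coeff b x).support) : e < E :=
  (opow_lt_opow_iff_right hb).1 ((opow_le_of_mem_support_coeff he).trans_lt hx)

theorem le_log_of_mem_support_coeff (hb : 1 < b) {x e : Ordinal}
    (he : e ∈ (coeff b x).support) : e ≤ log b x :=
  le_log_of_opow_le hb (opow_le_of_mem_support_coeff he)

theorem div_opow_lt (hb : b ≠ 0) {x E : Ordinal} (hx : x < b ^ Order.succ E) : x / b ^ E < b :=
  (lt_mul_iff_div_lt (opow_ne_zero E hb)).1 (by rwa [← opow_succ])

theorem coeff_of_lt_opow_succ (hb : 1 < b) {x E : Ordinal} (hx : x < b ^ Order.succ E) :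
    coeff b x = .single E (x / b ^ E) + coeff b (x % b ^ E) := by
  have hb₀ : b ≠ 0 := (zero_lt_one.trans hb).ne'
  conv_lhs => rw [← div_add_mod x (b ^ E)]
  rcases eq_or_ne (x / b ^ E) 0 with h0 | h0
  · rw [h0]
    simp
  · exact coeff_opow_mul_add hb h0 (div_opow_lt hb₀ hx) (mod_lt x (opow_ne_zero E hb₀))

theorem support_coeff_opow (hb : 1 < b) (γ : Ordinal) : (coeff b (b ^ γ)).support = {γ} := by
  have := coeff_opow_mul_add hb one_ne_zero hb (opow_pos γ (zero_lt_one.trans hb))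
  rw [mul_one, add_zero, coeff_zero_right, add_zero] at this
  rw [this, Finsupp.support_single _ one_ne_zero]

theorem coeff_filter_apply_lt (hb : 1 < b) (x : Ordinal) (p : Ordinal → Prop) [DecidablePred p]
    (e : Ordinal) : (coeff b x).filter p e < b := by
  rw [Finsupp.filter_apply]
  split_ifs
  exacts [coeff_lt hb x e, zero_lt_one.trans hb]

end Ordinal.CNF

namespace Ordinal

open CNF

set_option linter.deprecated false in
theorem lt_nadd_iff {a b c : Ordinal} :
    a < b ♯ c ↔ (∃ b' < b, a ≤ b' ♯ c) ∨ ∃ c' < c, a ≤ b ♯ c' := by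
  rw [nadd]
  simp [lt_blsub_iff]

set_option linter.deprecated false in
theorem nadd_le_iff {a b c : Ordinal} :
    b ♯ c ≤ a ↔ (∀ b' < b, b' ♯ c < a) ∧ ∀ c' < c, b ♯ c' < a := by
  rw [nadd]
  simp [blsub_le_iff]

theorem nadd_left_strictMono (a : Ordinal) : StrictMono (a ♯ ·) :=
  fun b _ h => lt_nadd_iff.2 (Or.inr ⟨b, h, le_rfl⟩)

theorem nadd_right_strictMono (b : Ordinal) : StrictMono (· ♯ b) :=
  fun a _ h => lt_nadd_iff.2 (Or.inl ⟨a, h, le_rfl⟩)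

theorem nadd_le_nadd {a b c d : Ordinal} (hab : a ≤ b) (hcd : c ≤ d) : a ♯ c ≤ b ♯ d :=
  ((nadd_right_strictMono c).monotone hab).trans ((nadd_left_strictMono b).monotone hcd)

theorem nadd_le_of_strictMono {f : Ordinal → Ordinal → Ordinal}
    (hleft : ∀ a, StrictMono (f a)) (hright : ∀ b, StrictMono (f · b)) (a b : Ordinal) :
    a ♯ b ≤ f a b := by
  induction a, b using WellFoundedLT.induction₂ with
  | ih a b IH =>
  refine nadd_le_iff.2 ⟨fun a' ha' => ?_, fun b' hb' => ?_⟩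
  · exact (IH a' b (Prod.mk_lt_mk.2 (Or.inl ⟨ha', le_rfl⟩))).trans_lt (hright b ha')
  · exact (IH a b' (Prod.mk_lt_mk.2 (Or.inr ⟨le_rfl, hb'⟩))).trans_lt (hleft a hb')

theorem add_le_nadd (a b : Ordinal) : a + b ≤ a ♯ b := by
  induction b using WellFoundedLT.induction with
  | ind b IH =>
  rcases eq_or_ne b 0 with rfl | hb
  · exact (add_zero a).trans_le (nadd_right_strictMono 0).le_apply
  refine le_of_forall_lt fun x hx => ?_
  obtain ⟨d, hd, hxd⟩ := (lt_add_iff hb).1 hx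
  exact hxd.trans_lt ((IH d hd).trans_lt (nadd_left_strictMono a hd))

theorem nadd_add_nadd_le (a b c d : Ordinal) : (a ♯ b) + (c ♯ d) ≤ (a + c) ♯ (b + d) := by
  induction c, d using WellFoundedLT.induction₂ with
  | ih c d IH =>
  rcases eq_or_ne (c ♯ d) 0 with hcd | hcd
  · rw [hcd, add_zero]
    exact nadd_le_nadd le_self_add le_self_add
  refine le_of_forall_lt fun x hx => ?_
  obtain ⟨u, hu, hxu⟩ := (lt_add_iff hcd).1 hx
  rcases lt_nadd_iff.1 hu with ⟨c', hc', hu'⟩ | ⟨d', hd', hu'⟩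
  · calc x ≤ (a ♯ b) + (c' ♯ d) := hxu.trans (by gcongr)
      _ ≤ (a + c') ♯ (b + d) := IH c' d (Prod.mk_lt_mk.2 (Or.inl ⟨hc', le_rfl⟩))
      _ < (a + c) ♯ (b + d) := nadd_right_strictMono _ (by gcongr)
  · calc x ≤ (a ♯ b) + (c ♯ d') := hxu.trans (by gcongr)
      _ ≤ (a + c) ♯ (b + d') := IH c d' (Prod.mk_lt_mk.2 (Or.inr ⟨le_rfl, hd'⟩))
      _ < (a + c) ♯ (b + d) := nadd_left_strictMono _ (by gcongr)

theorem add_comm_of_lt_omega0 {a b : Ordinal} (ha : a < ω) (hb : b < ω) : a + b = b + a := by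
  obtain ⟨m, rfl⟩ := lt_omega0.1 ha
  obtain ⟨n, rfl⟩ := lt_omega0.1 hb
  rw [← Nat.cast_add, Nat.add_comm, Nat.cast_add]

theorem coeff_add_coeff_lt_omega0 (x y e : Ordinal) : (coeff ω x + coeff ω y) e < ω :=
  isPrincipal_add_omega0 (coeff_lt one_lt_omega0 x e) (coeff_lt one_lt_omega0 y e)

def cnfAdd (a b : Ordinal) : Ordinal :=
  eval ω (coeff ω a + coeff ω b)

theorem cnfAdd_comm (a b : Ordinal) : cnfAdd a b = cnfAdd b a := by
  unfold cnfAdd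
  congr 1
  ext e
  exact add_comm_of_lt_omega0 (coeff_lt one_lt_omega0 a e) (coeff_lt one_lt_omega0 b e)

theorem cnfAdd_lt_opow {a b E : Ordinal} (ha : a < ω ^ E) (hb : b < ω ^ E) :
    cnfAdd a b < ω ^ E := by
  refine eval_lt (coeff_add_coeff_lt_omega0 a b) fun e he => ?_
  rcases Finset.mem_union.1 (Finsupp.support_add he) with he | he
  · exact lt_of_mem_support_coeff one_lt_omega0 ha he
  · exact lt_of_mem_support_coeff one_lt_omega0 hb he

theorem cnfAdd_of_lt_opow_succ {a b E : Ordinal} (ha : a < ω ^ Order.succ E)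
    (hb : b < ω ^ Order.succ E) :
    cnfAdd a b = ω ^ E * (a / ω ^ E + b / ω ^ E) + cnfAdd (a % ω ^ E) (b % ω ^ E) := by
  have hE : ω ^ E ≠ 0 := opow_ne_zero E omega0_ne_zero
  have hr := mod_lt a hE
  have hs := mod_lt b hE
  have hsum : coeff ω a + coeff ω b = .single E (a / ω ^ E + b / ω ^ E) +
      (coeff ω (a % ω ^ E) + coeff ω (b % ω ^ E)) := by
    rw [coeff_of_lt_opow_succ one_lt_omega0 ha, coeff_of_lt_opow_succ one_lt_omega0 hb]
    ext e
    rcases eq_or_ne e E with rfl | he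
    · simp [coeff_eq_zero_of_lt hr, coeff_eq_zero_of_lt hs]
    · simp [Finsupp.single_eq_of_ne he]
  rw [cnfAdd, hsum, eval_single_add']
  · rfl
  intro e he
  rcases Finset.mem_union.1 (Finsupp.support_add he) with he | he
  · exact lt_of_mem_support_coeff one_lt_omega0 hr he
  · exact lt_of_mem_support_coeff one_lt_omega0 hs he

theorem mod_lt_of_le_max {a b d : Ordinal} (hd : d ≠ 0) (h : d ≤ max a b) :
    (a % d, b % d) < (a, b) := by
  rcases le_max_iff.1 h with ha | hb
  · exact Prod.mk_lt_mk.2 (Or.inl ⟨(mod_lt a hd).trans_le ha, mod_le b d⟩)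
  · exact Prod.mk_lt_mk.2 (Or.inr ⟨mod_le a d, (mod_lt b hd).trans_le hb⟩)

theorem cnfAdd_right_strictMono (b : Ordinal) : StrictMono (cnfAdd · b) := by
  suffices ∀ a b, ∀ a' < a, cnfAdd a' b < cnfAdd a b from fun a' a h => this a b a' h
  intro a b
  induction a, b using WellFoundedLT.induction₂ with
  | ih a b IH =>
  intro a' h
  set E := log ω (max a b)
  have hmax : max a b ≠ 0 := (h.trans_le (le_max_left a b)).ne_bot
  have hE : ω ^ E ≠ 0 := opow_ne_zero E omega0_ne_zero
  have hlt : max a b < ω ^ Order.succ E := lt_opow_succ_log_self one_lt_omega0 _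
  have ha := (le_max_left a b).trans_lt hlt
  have hb := (le_max_right a b).trans_lt hlt
  rw [cnfAdd_of_lt_opow_succ (h.trans ha) hb, cnfAdd_of_lt_opow_succ ha hb]
  have hm : a' / ω ^ E ≤ a / ω ^ E :=
    (mul_le_iff_le_div hE).1 ((mul_div_le a' _).trans h.le)
  rcases hm.lt_or_eq with hm | hm
  · have hsucc : a' / ω ^ E + b / ω ^ E + 1 ≤ a / ω ^ E + b / ω ^ E := by
      rw [add_assoc, add_comm_of_lt_omega0 (div_opow_lt omega0_ne_zero hb) one_lt_omega0, ← add_assoc]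
      gcongr
      exact Order.add_one_le_of_lt hm
    calc _ < ω ^ E * (a' / ω ^ E + b / ω ^ E) + ω ^ E :=
          add_lt_add_right (cnfAdd_lt_opow (mod_lt _ hE) (mod_lt _ hE)) _
      _ = ω ^ E * (a' / ω ^ E + b / ω ^ E + 1) := (mul_add_one _ _).symm
      _ ≤ ω ^ E * (a / ω ^ E + b / ω ^ E) := by gcongr
      _ ≤ _ := le_self_add
  · rw [hm]
    refine add_lt_add_right (IH _ _ (mod_lt_of_le_max hE (opow_log_le_self ω hmax)) _ ?_) _
    have h' := h
    rw [← div_add_mod a' (ω ^ E), ← div_add_mod a (ω ^ E), hm] at h'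
    exact (add_lt_add_iff_left _).1 h'

theorem cnfAdd_left_strictMono (a : Ordinal) : StrictMono (cnfAdd a) := fun b c h => by
  simpa only [cnfAdd_comm a] using cnfAdd_right_strictMono a h

theorem cnfAdd_le_nadd (a b : Ordinal) : cnfAdd a b ≤ a ♯ b := by
  induction a, b using WellFoundedLT.induction₂ with
  | ih a b IH =>
  rcases eq_or_ne (max a b) 0 with hmax | hmax
  · obtain ⟨rfl, rfl⟩ : a = 0 ∧ b = 0 := by simpa using hmax
    simp [cnfAdd]
  set E := log ω (max a b)
  have hE : ω ^ E ≠ 0 := opow_ne_zero E omega0_ne_zero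
  have hlt : max a b < ω ^ Order.succ E := lt_opow_succ_log_self one_lt_omega0 _
  rw [cnfAdd_of_lt_opow_succ ((le_max_left a b).trans_lt hlt) ((le_max_right a b).trans_lt hlt)]
  calc _ ≤ (ω ^ E * (a / ω ^ E) ♯ ω ^ E * (b / ω ^ E)) + ((a % ω ^ E) ♯ (b % ω ^ E)) := by
        rw [mul_add]
        gcongr
        · exact add_le_nadd _ _
        · exact IH _ _ (mod_lt_of_le_max hE (opow_log_le_self ω hmax))
    _ ≤ (ω ^ E * (a / ω ^ E) + a % ω ^ E) ♯ (ω ^ E * (b / ω ^ E) + b % ω ^ E) :=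
        nadd_add_nadd_le _ _ _ _
    _ = a ♯ b := by rw [div_add_mod, div_add_mod]

theorem nadd_eq_cnfAdd (a b : Ordinal) : a ♯ b = cnfAdd a b :=
  (nadd_le_of_strictMono cnfAdd_left_strictMono cnfAdd_right_strictMono a b).antisymm
    (cnfAdd_le_nadd a b)

theorem coeff_nadd (a b : Ordinal) : coeff ω (a ♯ b) = coeff ω a + coeff ω b := by
  rw [nadd_eq_cnfAdd, cnfAdd, coeff_eval one_lt_omega0 (coeff_add_coeff_lt_omega0 a b)]

theorem support_coeff_nadd (a b : Ordinal) :
    (coeff ω (a ♯ b)).support = (coeff ω a).support ∪ (coeff ω b).support := by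
  ext e
  simp only [coeff_nadd, Finsupp.mem_support_iff, Finsupp.add_apply, Finset.mem_union, ne_eq,
    add_eq_zero_iff, not_and_or]

theorem coeff_add (x y : Ordinal) :
    coeff ω (x + y) = (coeff ω x).filter (log ω y ≤ ·) + coeff ω y := by
  rcases eq_or_ne y 0 with rfl | hy
  · ext e
    simp
  set E := log ω y
  have hsplit :
      eval ω ((coeff ω x).filter (E ≤ ·)) + eval ω ((coeff ω x).filter (· < E)) = x := by
    rw [← eval_add]
    · convert eval_coeff ω x
      ext e
      simp only [Finsupp.add_apply, Finsupp.filter_apply]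
      split_ifs <;> simp_all [not_le.2]
    · intro e₁ he₁ e₂ he₂
      exact (Finset.mem_filter.1 he₂).2.le.trans (Finset.mem_filter.1 he₁).2
  have hlow : eval ω ((coeff ω x).filter (· < E)) + y = y :=
    add_of_omega0_opow_le (eval_lt (coeff_filter_apply_lt one_lt_omega0 x _) fun e he =>
      (Finset.mem_filter.1 he).2) (opow_log_le_self ω hy)
  have hhigh : eval ω ((coeff ω x).filter (E ≤ ·)) + y =
      eval ω ((coeff ω x).filter (E ≤ ·) + coeff ω y) := by
    rw [eval_add, eval_coeff]
    intro e₁ he₁ e₂ he₂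
    exact (le_log_of_mem_support_coeff one_lt_omega0 he₂).trans (Finset.mem_filter.1 he₁).2
  have hxy : x + y = eval ω ((coeff ω x).filter (E ≤ ·) + coeff ω y) := by
    conv_lhs => rw [← hsplit, add_assoc, hlow]
    exact hhigh
  rw [hxy]
  refine coeff_eval one_lt_omega0 fun e => ?_
  rw [Finsupp.add_apply]
  exact isPrincipal_add_omega0 (coeff_filter_apply_lt one_lt_omega0 x _ e) (coeff_lt one_lt_omega0 y e)

theorem support_coeff_add_subset (x y : Ordinal) :
    (coeff ω (x + y)).support ⊆ (coeff ω x).support ∪ (coeff ω y).support := by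
  rw [coeff_add]
  exact Finsupp.support_add.trans
    (Finset.union_subset_union (Finset.filter_subset _ _) subset_rfl)

theorem eq_of_mem_support_coeff {z e : Ordinal} (hz : z = 0 ∨ ω ^ z = z)
    (he : e ∈ (coeff ω z).support) : e = z := by
  rcases hz with rfl | hz
  · simp at he
  · rwa [← hz, support_coeff_opow one_lt_omega0, Finset.mem_singleton] at he

theorem mem_of_support_coeff_subset {S : Set Ordinal} (h0 : 0 ∈ S)
    (hadd : ∀ x ∈ S, ∀ y ∈ S, x + y ∈ S) (hopow : ∀ x ∈ S, ω ^ x ∈ S) {x : Ordinal}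
    (hx : ∀ e ∈ (coeff ω x).support, e ∈ S) : x ∈ S := by
  have hmul : ∀ e ∈ S, ∀ n : ℕ, ω ^ e * n ∈ S := by
    intro e he n
    induction n with
    | zero => simpa using h0
    | succ n ih =>
      rw [Nat.cast_succ, mul_add_one]
      exact hadd _ ih _ (hopow e he)
  suffices ∀ f : Ordinal →₀ Ordinal, (∀ e, f e < ω) → (∀ e ∈ f.support, e ∈ S) → eval ω f ∈ S by
    simpa using this _ (coeff_lt one_lt_omega0 x) hx
  intro f
  induction f using Finsupp.induction_on_max with
  | zero => simpa using h0
  | single_add e c f hf hc IH =>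
    intro hlt hS
    have hle : ∀ e', f e' ≤ (.single e c + f) e' := fun e' => le_add_self
    have hce : (.single e c + f) e = c := by
      simp [Finsupp.notMem_support_iff.1 fun h => (hf e h).false]
    obtain ⟨n, hn⟩ := lt_omega0.1 (hce ▸ hlt e)
    rw [eval_single_add' _ hf, hn]
    refine hadd _ (hmul e (hS e ?_) n) _ (IH (fun e' => (hle e').trans_lt (hlt e')) ?_)
    · rwa [Finsupp.mem_support_iff, hce]
    · intro e' he'
      exact hS e' (Finsupp.mem_support_iff.2
        ((pos_iff_ne_zero.2 (Finsupp.mem_support_iff.1 he')).trans_le (hle e')).ne')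

structure IsCNFClosed (S : Set Ordinal) : Prop where
  zero_mem : 0 ∈ S
  add_mem {x y : Ordinal} : x ∈ S → y ∈ S → x + y ∈ S
  opow_mem {x : Ordinal} : x ∈ S → ω ^ x ∈ S
  mem_of_mem_support {x e : Ordinal} : x ∈ S → e ∈ (coeff ω x).support → e ∈ S

theorem IsCNFClosed.mem_iff {S : Set Ordinal} (hS : IsCNFClosed S) {x : Ordinal} :
    x ∈ S ↔ ∀ e ∈ (coeff ω x).support, e ∈ S :=
  ⟨fun hx _ he => hS.mem_of_mem_support hx he, mem_of_support_coeff_subset hS.zero_mem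
    (fun _ hx _ hy => hS.add_mem hx hy) fun _ hx => hS.opow_mem hx⟩

theorem IsCNFClosed.nadd_mem_iff {S : Set Ordinal} (hS : IsCNFClosed S) {a b : Ordinal} :
    a ♯ b ∈ S ↔ a ∈ S ∧ b ∈ S := by
  rw [hS.mem_iff (x := a ♯ b), hS.mem_iff (x := a), hS.mem_iff (x := b), support_coeff_nadd]
  simp only [Finset.mem_union, or_imp, forall_and]

theorem opow_eq_self_of_isSuccLimit {o : Ordinal} (ho : Order.IsSuccLimit o)
    (h : ∀ x < o, ω ^ x < o) : ω ^ o = o :=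
  ((opow_le_of_isSuccLimit omega0_ne_zero ho).2 fun x hx => (h x hx).le).antisymm
    (right_le_opow o one_lt_omega0)

theorem opow_ord_eq_self {κ : Cardinal} (hκ : Cardinal.aleph0 < κ) : ω ^ κ.ord = κ.ord :=
  opow_eq_self_of_isSuccLimit (Cardinal.isSuccLimit_ord hκ.le) fun _ hx =>
    isPrincipal_opow_ord hκ.le (Cardinal.omega0_lt_ord.2 hκ) hx

end Ordinal

theorem I_eq_zero_or_opow_eq_self : I.{u} = 0 ∨ ω ^ I.{u} = I.{u} := by
  rcases {c : Cardinal.{u} | WeaklyInaccessible c}.eq_empty_or_nonempty with h | h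
  · left
    rw [I, h, Cardinal.sInf_empty, Cardinal.ord_zero]
  · exact Or.inr (opow_ord_eq_self (csInf_mem h).1)

theorem Om_eq_zero_or_opow_eq_self (γ : Ordinal) : Om γ = 0 ∨ ω ^ Om γ = Om γ := by
  rw [Om]
  split_ifs with hγ
  · exact Or.inl rfl
  · refine Or.inr (opow_ord_eq_self ?_)
    rw [← Cardinal.aleph_zero, Cardinal.aleph_lt_aleph]
    exact pos_iff_ne_zero.2 hγ

theorem eq_zero_or_opow_eq_self_of_mem_R {σ : Ordinal} (hσ : σ ∈ R) : σ = 0 ∨ ω ^ σ = σ := by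
  rcases hσ with ⟨μ, -, rfl⟩ | rfl
  exacts [Om_eq_zero_or_opow_eq_self _, I_eq_zero_or_opow_eq_self]

theorem psiOf_eq_zero_or_opow_eq_self {F : Set Ordinal → Set Ordinal} (hsub : ∀ X, X ⊆ F X)
    (hadd : ∀ X, ∀ x ∈ F X, ∀ y ∈ F X, x + y ∈ F X) (hopow : ∀ X, ∀ x ∈ F X, ω ^ x ∈ F X)
    {σ : Ordinal} (hσ : σ = 0 ∨ ω ^ σ = σ) :
    psiOf F σ = 0 ∨ ω ^ psiOf F σ = psiOf F σ := by
  have hmem : psiOf F σ ∈ {β | β < σ ∧ σ ∈ F (Iio β) ∧ F (Iio β) ∩ Iio σ ⊆ Iio β} ∪ {σ} :=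
    csInf_mem ⟨σ, Or.inr rfl⟩
  set ψ := psiOf F σ
  rcases hmem with ⟨hψσ, -, hcl⟩ | hψσ
  · rcases hσ with rfl | hσ
    · exact absurd hψσ not_lt_zero
    rcases eq_or_ne ψ 0 with hψ | hψ
    · exact Or.inl hψ
    have hopow' : ∀ x < ψ, ω ^ x < ψ := fun x hx =>
      hcl ⟨hopow _ x (hsub _ hx), hσ ▸ (opow_lt_opow_iff_right one_lt_omega0).2 (hx.trans hψσ)⟩
    have hadd' : IsPrincipal (· + ·) ψ := fun x y hx hy =>
      hcl ⟨hadd _ x (hsub _ hx) y (hsub _ hy), hσ ▸ isPrincipal_add_omega0_opow σ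
        (hσ.symm ▸ hx.trans hψσ) (hσ.symm ▸ hy.trans hψσ)⟩
    have hone : 1 < ψ := by simpa using hopow' 0 (pos_iff_ne_zero.2 hψ)
    exact Or.inr (opow_eq_self_of_isSuccLimit (isSuccLimit_of_isPrincipal_add hone hadd') hopow')
  · rwa [Set.mem_singleton_iff.1 hψσ]

theorem H_subset {α : Ordinal} {X Y : Set Ordinal} (hX : X ∪ {0, I} ⊆ Y)
    (hadd : ∀ γ ∈ Y, ∀ δ ∈ Y, γ + δ ∈ Y) (hopow : ∀ γ ∈ Y, ω ^ γ ∈ Y)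
    (hOm : ∀ γ ∈ Y, Om γ ∈ Y) (hpsi : ∀ σ ∈ R, ∀ β ∈ Y, β < α → σ ∈ Y → psi σ β ∈ Y) :
    H α X ⊆ Y := by
  rw [H]
  exact sInter_subset_of_mem ⟨hX, hadd, hopow, hOm, hpsi⟩

theorem subset_H (α : Ordinal) (X : Set Ordinal) : X ∪ {0, I} ⊆ H α X := by
  rw [H]
  exact subset_sInter fun Y hY => hY.1

theorem add_mem_H {α γ δ : Ordinal} {X : Set Ordinal} (hγ : γ ∈ H α X) (hδ : δ ∈ H α X) :
    γ + δ ∈ H α X := by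
  rw [H] at *
  exact fun Y hY => hY.2.1 γ (hγ Y hY) δ (hδ Y hY)

theorem opow_mem_H {α γ : Ordinal} {X : Set Ordinal} (hγ : γ ∈ H α X) : ω ^ γ ∈ H α X := by
  rw [H] at *
  exact fun Y hY => hY.2.2.1 γ (hγ Y hY)

theorem Om_mem_H {α γ : Ordinal} {X : Set Ordinal} (hγ : γ ∈ H α X) : Om γ ∈ H α X := by
  rw [H] at *
  exact fun Y hY => hY.2.2.2.1 γ (hγ Y hY)

theorem psi_mem_H {α β σ : Ordinal} {X : Set Ordinal} (hσ : σ ∈ R) (hβ : β ∈ H α X)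
    (hβα : β < α) (hσX : σ ∈ H α X) : psi σ β ∈ H α X := by
  rw [H] at *
  exact fun Y hY => hY.2.2.2.2 σ hσ β (hβ Y hY) hβα (hσX Y hY)

theorem psi_eq_zero_or_opow_eq_self {σ : Ordinal} (hσ : σ ∈ R) (β : Ordinal) :
    psi σ β = 0 ∨ ω ^ psi σ β = psi σ β :=
  psiOf_eq_zero_or_opow_eq_self (fun X => (subset_union_left).trans (subset_H β X))
    (fun _ _ hx _ hy => add_mem_H hx hy) (fun _ _ hx => opow_mem_H hx)
    (eq_zero_or_opow_eq_self_of_mem_R hσ)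

theorem isCNFClosed_H (α β : Ordinal) : IsCNFClosed (H α (Iio β)) where
  zero_mem := subset_H α _ (Or.inr (Or.inl rfl))
  add_mem := add_mem_H
  opow_mem := opow_mem_H
  mem_of_mem_support := by
    intro z e hz he
    set S := H α (Iio β)
    suffices S ⊆ {z | z ∈ S ∧ ∀ e ∈ (CNF.coeff ω z).support, e ∈ S} from (this hz).2 e he
    have hfix : ∀ z ∈ S, (z = 0 ∨ ω ^ z = z) → z ∈ S ∧ ∀ e ∈ (CNF.coeff ω z).support, e ∈ S :=
      fun z hz hz' => ⟨hz, fun e he => eq_of_mem_support_coeff hz' he ▸ hz⟩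
    refine H_subset ?_ ?_ ?_ ?_ ?_
    · rintro x (hx | rfl | rfl)
      · exact ⟨subset_H α _ (Or.inl hx), fun e he =>
          subset_H α _ (Or.inl ((CNF.le_of_mem_support_coeff one_lt_omega0 he).trans_lt hx))⟩
      · exact hfix 0 (subset_H α _ (Or.inr (Or.inl rfl))) (Or.inl rfl)
      · exact hfix I (subset_H α _ (Or.inr (Or.inr rfl))) I_eq_zero_or_opow_eq_self
    · rintro γ ⟨hγ, hγe⟩ δ ⟨hδ, hδe⟩
      refine ⟨add_mem_H hγ hδ, fun e he => ?_⟩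
      rcases Finset.mem_union.1 (support_coeff_add_subset γ δ he) with he | he
      exacts [hγe e he, hδe e he]
    · rintro γ ⟨hγ, -⟩
      refine ⟨opow_mem_H hγ, fun e he => ?_⟩
      rw [CNF.support_coeff_opow one_lt_omega0, Finset.mem_singleton] at he
      rwa [he]
    · rintro γ ⟨hγ, -⟩
      exact hfix _ (Om_mem_H hγ) (Om_eq_zero_or_opow_eq_self γ)
    · rintro σ hσ γ ⟨hγ, -⟩ hγα ⟨hσS, -⟩
      exact hfix _ (psi_mem_H hσ hγ hγα hσS) (psi_eq_zero_or_opow_eq_self hσ γ)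

theorem stmt10_general (δ₀ δ₁ η α : Ordinal) (h : llr η δ₀ δ₁) : llr η (δ₀ ♯ α) (δ₁ ♯ α) := by
  refine ⟨nadd_right_strictMono α h.1, fun σ hσ β hδ₁α hη => ?_⟩
  have hH := isCNFClosed_H β (psi σ β)
  rw [hH.nadd_mem_iff] at hδ₁α ⊢
  exact ⟨h.2 σ hσ β hδ₁α.1 hη, hδ₁α.2⟩

theorem stmt10 (hex : ∃ c : Cardinal, WeaklyInaccessible c)
    (δ₀ δ₁ η α : Ordinal) (h : llr η δ₀ δ₁) : llr η (δ₀ ♯ α) (δ₁ ♯ α) :=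
  stmt10_general δ₀ δ₁ η α h

end
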